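/- Soundness under the weakened simulation-inducing requirement: Let TS = (Σ, Init, Tr, P) be a recidivist transition system and let ⋎ : Σ → Σ be a squeezer with base B for TS satisfying: (initial anchor) σ ∈ Init implies ⋎(σ) ∈ Init; (weak simulation inducing) for every σ ∈ Σ there exists n_σ ≥ 1 such that for every σ' with (σ, σ') ∈ Tr^{n_σ} there exists m ≥ 0 with (⋎(σ), ⋎(σ')) ∈ Tr^m; (fault preservation) σ ∉ P implies ⋎(σ) ∉ P. If TS_B = (Σ, Init ∩ Σ_B, Tr, P) is safe, then TS is safe. -/
import Mathlib


/-- `TrPow Tr k σ σ'` : `σ'` is reachable from `σ` by a trace of length exactly `k`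
(k-fold relational composition of `Tr`, with `TrPow Tr 0` the identity relation). -/
def TrPow {S : Type*} (Tr : S → S → Prop) : ℕ → S → S → Prop
  | 0 => fun σ σ' => σ = σ'
  | n + 1 => fun σ σ' => ∃ σ₁, Tr σ σ₁ ∧ TrPow Tr n σ₁ σ'

/-- A transition system is safe if every state reachable (by a finite trace)
from an initial state is a good state. -/
def Safe {S : Type*} (Init : Set S) (Tr : S → S → Prop) (P : Set S) : Prop :=
  ∀ σ₀ σ, σ₀ ∈ Init → Relation.ReflTransGen Tr σ₀ σ → σ ∈ P

/-- Recidivism: bad states have successors, and transitions from bad states lead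
to bad states. -/
def Recidivist {S : Type*} (Tr : S → S → Prop) (P : Set S) : Prop :=
  (∀ σ, σ ∉ P → ∃ σ', Tr σ σ') ∧ (∀ σ σ', σ ∉ P → Tr σ σ' → σ' ∉ P)

lemma trpow_trans {S : Type*} {Tr : S → S → Prop} :
    ∀ {m k : ℕ} {a b c : S}, TrPow Tr m a b → TrPow Tr k b c → TrPow Tr (m + k) a c := by
  intro m
  induction m with
  | zero => intro k a b c h h'; cases h; simpa using h'
  | succ n ih =>
    rintro k a b c ⟨x, hx, hxb⟩ h'
    rw [show n + 1 + k = (n + k) + 1 by omega]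
    exact ⟨x, hx, ih hxb h'⟩

lemma trpow_of_rtg {S : Type*} {Tr : S → S → Prop} {a b : S}
    (h : Relation.ReflTransGen Tr a b) : ∃ k, TrPow Tr k a b := by
  induction h with
  | refl => exact ⟨0, rfl⟩
  | tail _ hbc ih =>
    obtain ⟨k, hk⟩ := ih
    exact ⟨k + 1, trpow_trans hk ⟨_, hbc, rfl⟩⟩

lemma rtg_of_trpow {S : Type*} {Tr : S → S → Prop} :
    ∀ {k : ℕ} {a b : S}, TrPow Tr k a b → Relation.ReflTransGen Tr a b := by
  intro k
  induction k with
  | zero => rintro a b rfl; rfl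
  | succ n ih =>
    rintro a b ⟨x, hx, hxb⟩
    exact Relation.ReflTransGen.head hx (ih hxb)

lemma trpow_split {S : Type*} {Tr : S → S → Prop} :
    ∀ (n : ℕ) {k : ℕ} {a c : S}, TrPow Tr (n + k) a c →
      ∃ b, TrPow Tr n a b ∧ TrPow Tr k b c := by
  intro n
  induction n with
  | zero => intro k a c h; exact ⟨a, rfl, by simpa using h⟩
  | succ m ih =>
    intro k a c h
    rw [show m + 1 + k = (m + k) + 1 by omega] at h
    obtain ⟨x, hx, hxr⟩ := h
    obtain ⟨b, h₁, h₂⟩ := ih hxr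
    exact ⟨b, ⟨x, hx, h₁⟩, h₂⟩

/-- Bad states can be extended to bad states at any exact distance. -/
lemma bad_extend {S : Type*} {Tr : S → S → Prop} {P : Set S}
    (hrec : Recidivist Tr P) :
    ∀ (j : ℕ) (σ : S), σ ∉ P → ∃ σ', TrPow Tr j σ σ' ∧ σ' ∉ P := by
  intro j
  induction j with
  | zero => exact fun σ h => ⟨σ, rfl, h⟩
  | succ n ih =>
    intro σ h
    obtain ⟨σ₁, h₁⟩ := hrec.1 σ h
    obtain ⟨σ', hs, hb⟩ := ih σ₁ (hrec.2 σ σ₁ h h₁)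
    exact ⟨σ', ⟨σ₁, h₁, hs⟩, hb⟩

/-- **Soundness under the weakened simulation-inducing requirement.**
Here the number of simulating steps `m` may depend on the target state `σ'`. -/
theorem squeezer_soundness_weak_simulation {S X : Type*}
    (Init : Set S) (Tr : S → S → Prop) (P : Set S)
    (prec : X → X → Prop) (hwf : WellFounded prec)
    (htrans : ∀ x y z, prec x y → prec y z → prec x z)
    (B : Set X) (hmin : ∀ x : X, (∀ y, ¬ prec y x) → x ∈ B)
    (ρ : S → X) (f : S → S)
    (hsqueeze : ∀ σ, ρ σ ∉ B → prec (ρ (f σ)) (ρ σ))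
    (hrec : Recidivist Tr P)
    (hanchor : ∀ σ, σ ∈ Init → f σ ∈ Init)
    (hweak_sim : ∀ σ, ∃ n : ℕ, 1 ≤ n ∧
      ∀ σ', TrPow Tr n σ σ' → ∃ m : ℕ, TrPow Tr m (f σ) (f σ'))
    (hfault : ∀ σ, σ ∉ P → f σ ∉ P)
    (hbase_safe : ∀ σ₀ σ, σ₀ ∈ Init → ρ σ₀ ∈ B → Relation.ReflTransGen Tr σ₀ σ → σ ∈ P) :
    Safe Init Tr P := by
  -- Key: if a bad state is reachable from σ₀, then a bad state is reachable from f σ₀.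
  have key : ∀ (k : ℕ) (σ₀ σ : S), TrPow Tr k σ₀ σ → σ ∉ P →
      ∃ (k' : ℕ) (σ' : S), TrPow Tr k' (f σ₀) σ' ∧ σ' ∉ P := by
    intro k
    induction k using Nat.strong_induction_on with
    | _ k ih =>
      intro σ₀ σ hreach hbad
      obtain ⟨n, hn1, hsim⟩ := hweak_sim σ₀
      rcases le_or_gt n k with hle | hlt
      · -- split the trace at distance n
        have hreach' : TrPow Tr (n + (k - n)) σ₀ σ := by
          rwa [Nat.add_sub_cancel' hle]
        obtain ⟨σ₁, h₁, h₂⟩ := trpow_split n hreach'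
        obtain ⟨m, hm⟩ := hsim σ₁ h₁
        obtain ⟨k', σ', hk', hb'⟩ := ih (k - n) (by omega) σ₁ σ h₂ hbad
        exact ⟨m + k', σ', trpow_trans hm hk', hb'⟩
      · -- extend the bad state out to distance n
        obtain ⟨σ', hext, hb'⟩ := bad_extend hrec (n - k) σ hbad
        have h' : TrPow Tr n σ₀ σ' := by
          have := trpow_trans hreach hext
          rwa [Nat.add_sub_cancel' (le_of_lt hlt)] at this
        obtain ⟨m, hm⟩ := hsim σ' h'
        exact ⟨m, f σ', hm, hfault σ' hb'⟩
  -- main argument: well-founded induction on ρ σ₀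
  intro σ₀ σ hinit hreach
  by_contra hbad
  obtain ⟨k, hk⟩ := trpow_of_rtg hreach
  -- generalize: no initial state has a reachable bad state
  have main : ∀ (x : X) (σ₀ : S), ρ σ₀ = x → σ₀ ∈ Init →
      ∀ (k : ℕ) (σ : S), TrPow Tr k σ₀ σ → σ ∈ P := by
    intro x
    induction x using hwf.induction with
    | _ x ihx =>
      rintro σ₀ rfl hinit k σ hreach
      by_contra hbad
      by_cases hB : ρ σ₀ ∈ B
      · exact hbad (hbase_safe σ₀ σ hinit hB (rtg_of_trpow hreach))
      · obtain ⟨k', σ', hk', hb'⟩ := key k σ₀ σ hreach hbad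
        exact hb' (ihx (ρ (f σ₀)) (hsqueeze σ₀ hB) (f σ₀) rfl (hanchor σ₀ hinit) k' σ' hk')
  exact hbad (main (ρ σ₀) σ₀ rfl hinit k σ hk)
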